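/- Let k be a field of characteristic zero containing i, and let α = 9. The surface X : x₀²x₁ + x₁²x₃ + x₂³ - 10x₂²x₃ + 9x₂x₃² = 0 in ℙ³_k contains the line l₁ : {x₁ = x₂ - x₃ = 0} and the line l₂ parametrized on the chart x₀ ≠ 0 by t ↦ (1, t, (1-√α)/(α-1)·t, √((√α+1)/α) + (α-√α)/(α²-α)·t) with √α = 3, and l₁ and l₂ are disjoint in ℙ³. -/
import Mathlib


/-- The cubic form `x₀²x₁ + x₁²x₃ + x₂³ - 10x₂²x₃ + 9x₂x₃²` (the case `α = 9`). -/
def quarticForm9 {K : Type*} [Field K] (v : Fin 4 → K) : K :=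
  v 0 ^ 2 * v 1 + v 1 ^ 2 * v 3 + v 2 ^ 3 - 10 * v 2 ^ 2 * v 3 + 9 * v 2 * v 3 ^ 2

/-- With `α = 9`, the surface `X : x₀²x₁ + x₁²x₃ + x₂³ - 10x₂²x₃ + 9x₂x₃² = 0` contains
the line `l₁ : {x₁ = x₂ - x₃ = 0}` and the line `l₂` parametrized on the chart `x₀ ≠ 0`
by `t ↦ (1 : t : -t/4 : 2/3 + t/12)` (the projective line through `(1:0:0:2/3)` with
direction `(0:1:-1/4:1/12)`), and `l₁` and `l₂` are disjoint in `ℙ³` over `k̄`. -/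
theorem stmt14 (k : Type*) [Field k] [CharZero k] (hi : ∃ j : k, j ^ 2 = -1)
    (l₁ l₂ : Set (Projectivization (AlgebraicClosure k) (Fin 4 → AlgebraicClosure k)))
    (h₁ : l₁ = {p | p.rep 1 = 0 ∧ p.rep 2 - p.rep 3 = 0})
    (h₂ : l₂ = {p | ∃ (a b : AlgebraicClosure k)
        (h : a • (![1, 0, 0, 2/3] : Fin 4 → AlgebraicClosure k) +
          b • ![0, 1, -(1/4), 1/12] ≠ 0),
      p = Projectivization.mk (AlgebraicClosure k)
        (a • (![1, 0, 0, 2/3] : Fin 4 → AlgebraicClosure k) +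
          b • ![0, 1, -(1/4), 1/12]) h}) :
    (∀ p ∈ l₁, quarticForm9 p.rep = 0) ∧
    (∀ p ∈ l₂, quarticForm9 p.rep = 0) ∧
    (∀ t : AlgebraicClosure k,
      ∀ h : (![1, t, -t/4, 2/3 + t/12] : Fin 4 → AlgebraicClosure k) ≠ 0,
      Projectivization.mk (AlgebraicClosure k) ![1, t, -t/4, 2/3 + t/12] h ∈ l₂) ∧
    l₁ ∩ l₂ = ∅ := by
  subst h₁ h₂
  refine ⟨?_, ?_, ?_, ?_⟩
  · rintro p ⟨hp1, hp23⟩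
    have h23 : p.rep 2 = p.rep 3 := sub_eq_zero.mp hp23
    simp only [quarticForm9, hp1, h23]
    ring
  · rintro p ⟨a, b, h, rfl⟩
    obtain ⟨c, hc⟩ := Projectivization.exists_smul_eq_mk_rep (AlgebraicClosure k) _ h
    have e : ∀ i, (Projectivization.mk (AlgebraicClosure k) _ h).rep i =
        (c : AlgebraicClosure k) * (a * (![1, 0, 0, 2/3] : Fin 4 → AlgebraicClosure k) i
          + b * ![0, 1, -(1/4), 1/12] i) := by
      intro i
      rw [← congrFun hc i]
      fin_cases i <;> simp [Units.smul_def] <;> ring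
    simp only [quarticForm9, e, Matrix.cons_val_zero, Matrix.cons_val_one, Matrix.head_cons,
      Matrix.cons_val_two, Matrix.tail_cons, Matrix.cons_val_three]
    ring
  · intro t h
    refine ⟨1, t, ?_, ?_⟩
    · have : (1 : AlgebraicClosure k) • (![1, 0, 0, 2/3] : Fin 4 → AlgebraicClosure k)
          + t • ![0, 1, -(1/4), 1/12] = ![1, t, -t/4, 2/3 + t/12] := by
        funext i
        fin_cases i <;> simp <;> ring
      rw [this]; exact h
    · congr 1
      funext i
      fin_cases i <;> simp <;> ring
  · rw [Set.eq_empty_iff_forall_notMem]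
    rintro p ⟨⟨hp1, hp23⟩, a, b, h, rfl⟩
    obtain ⟨c, hc⟩ := Projectivization.exists_smul_eq_mk_rep (AlgebraicClosure k) _ h
    have e : ∀ i, (Projectivization.mk (AlgebraicClosure k) _ h).rep i =
        (c : AlgebraicClosure k) * (a * (![1, 0, 0, 2/3] : Fin 4 → AlgebraicClosure k) i
          + b * ![0, 1, -(1/4), 1/12] i) := by
      intro i
      rw [← congrFun hc i]
      fin_cases i <;> simp [Units.smul_def] <;> ring
    rw [e] at hp1
    rw [e, e] at hp23
    simp only [Matrix.cons_val_zero, Matrix.cons_val_one, Matrix.head_cons,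
      Matrix.cons_val_two, Matrix.tail_cons, Matrix.cons_val_three] at hp1 hp23
    have hc0 : (c : AlgebraicClosure k) ≠ 0 := c.ne_zero
    have hb : b = 0 := by
      have h' : (c : AlgebraicClosure k) * b = 0 := by
        have := hp1; push_cast at this; linear_combination this
      exact (mul_eq_zero.mp h').resolve_left hc0
    subst hb
    have ha : a = 0 := by
      have h' : (c : AlgebraicClosure k) * a = 0 := by
        have := hp23; push_cast at this; linear_combination (-(3:AlgebraicClosure k)/2) * this
      exact (mul_eq_zero.mp h').resolve_left hc0
    subst ha
    apply h
    simp
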